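/- Let $f : \mathbb{R}^m \to \mathbb{R}$ be concave and differentiable, $\tau_j \ge 0$, and define $Q(\theta) = f(\theta) - \sum_{j=1}^d \tau_j \|\theta_j\|$ where $\theta = (\theta_1^\top,\dots,\theta_d^\top)^\top$. If $\hat\theta$ maximises $Q$ over the subspace $S = \{\theta : \theta_j = 0 \text{ for } j \in J\}$ for some index set $J$, and additionally $\|\nabla_{\theta_j} f(\hat\theta)\| < \tau_j$ for every $j \in J$, then $\hat\theta$ is a global maximiser of $Q$ over all of $\mathbb{R}^m$. -/

import Mathlib

/-!
Write `P θ = ∑ j, τ j * ‖θ j‖`, a convex function, so that `Q = f - P`, and split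
`θ - θ̂ = (ψ - θ̂) + (θ - ψ)`, where `ψ` is `θ` with its `J`-blocks set to zero.
Since `θ̂` maximises `f - P` on the subspace, which contains `ψ`, the first-order condition gives
`f'(θ̂)(ψ - θ̂) ≤ P ψ - P θ̂`. The vector `θ - ψ` lives on the `J`-blocks, where Cauchy–Schwarz and
dual feasibility give `f'(θ̂)(θ - ψ) ≤ P θ - P ψ`. Adding both to the tangent inequality
`f θ ≤ f θ̂ + f'(θ̂)(θ - θ̂)` of the concave `f` yields `Q θ ≤ Q θ̂`.
-/

open Set

noncomputable def vnorm {n : ℕ} (x : Fin n → ℝ) : ℝ := Real.sqrt (∑ i, x i ^ 2)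

section FirstOrder

variable {E : Type*} [NormedAddCommGroup E] [NormedSpace ℝ E]

theorem fderiv_le_of_forall_sub_le_mul {f : E → ℝ} {x : E} (hf : DifferentiableAt ℝ f x)
    (u : E) {C : ℝ} (h : ∀ t ∈ Icc (0 : ℝ) 1, f (x + t • u) - f x ≤ t * C) :
    fderiv ℝ f x u ≤ C := by
  set φ : ℝ → ℝ := fun t => f (x + t • u) - t * C
  have hline : HasDerivAt (fun t : ℝ => x + t • u) u 0 := by
    simpa using ((hasDerivAt_id (0 : ℝ)).smul_const u).const_add x
  have hφ : HasDerivAt φ (fderiv ℝ f x u - C) 0 := by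
    have hf' : HasFDerivAt f (fderiv ℝ f x) (x + (0 : ℝ) • u) := by simpa using hf.hasFDerivAt
    exact (hf'.comp_hasDerivAt 0 hline).sub (hasDerivAt_mul_const C)
  have hmax : IsLocalMaxOn φ (Icc 0 1) 0 := IsMaxOn.localize fun t ht => by
    change φ t ≤ φ 0
    simp only [φ, zero_smul, add_zero, zero_mul, sub_zero]
    linarith [h t ht]
  have hone : (1 : ℝ) ∈ posTangentConeAt (Icc (0 : ℝ) 1) 0 :=
    mem_posTangentConeAt_of_segment_subset (by simp [segment_eq_Icc])
  simpa using hmax.hasFDerivWithinAt_nonpos hφ.hasFDerivAt.hasFDerivWithinAt hone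

theorem fderiv_le_sub_of_isMaxOn_sub {f P : E → ℝ} {s : Set E} {x y : E}
    (hP : ConvexOn ℝ s P) (hf : DifferentiableAt ℝ f x)
    (hmax : IsMaxOn (fun z => f z - P z) s x) (hx : x ∈ s) (hy : y ∈ s) :
    fderiv ℝ f x (y - x) ≤ P y - P x := by
  refine fderiv_le_of_forall_sub_le_mul hf _ fun t ⟨ht0, ht1⟩ => ?_
  have hseg : x + t • (y - x) = (1 - t) • x + t • y := by module
  have hconv := hP.2 hx hy (sub_nonneg.2 ht1) ht0 (sub_add_cancel 1 t)
  have hle : f ((1 - t) • x + t • y) - P ((1 - t) • x + t • y) ≤ f x - P x :=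
    hmax (hP.1 hx hy (sub_nonneg.2 ht1) ht0 (sub_add_cancel 1 t))
  simp only [smul_eq_mul] at hconv
  rw [hseg]
  linarith

theorem ConcaveOn.le_add_fderiv {f : E → ℝ} {s : Set E} {x y : E} (hf : ConcaveOn ℝ s f)
    (hd : DifferentiableAt ℝ f x) (hx : x ∈ s) (hy : y ∈ s) :
    f y ≤ f x + fderiv ℝ f x (y - x) := by
  -- `-f` is convex, and `(-f) - (-f) = 0` is maximised everywhere.
  have h := fderiv_le_sub_of_isMaxOn_sub hf.neg hd.neg (fun z _ => by simp) hx hy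
  rw [fderiv_neg] at h
  simp only [neg_apply, Pi.neg_apply] at h
  linarith

end FirstOrder

theorem LinearMap.apply_eq_sum_sum_smul_single {R M ι κ : Type*} [CommSemiring R]
    [AddCommMonoid M] [Module R M] [Fintype ι] [Fintype κ] [DecidableEq ι] [DecidableEq κ]
    (L : (ι → κ → R) →ₗ[R] M) (v : ι → κ → R) :
    L v = ∑ j, ∑ i, v j i • L (Pi.single j (Pi.single i 1)) := by
  conv_lhs => rw [← Finset.univ_sum_single v]
  refine (map_sum L _ _).trans (Finset.sum_congr rfl fun j _ => ?_)
  have hbasis (i : κ) : (fun k => if i = k then (1 : R) else 0) = Pi.single i 1 := by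
    ext k; simp [Pi.single_apply, eq_comm]
  simpa [hbasis] using (L ∘ₗ LinearMap.single R (fun _ => κ → R) j).pi_apply_eq_sum_univ (v j)

@[simp]
theorem vnorm_zero {n : ℕ} : vnorm (0 : Fin n → ℝ) = 0 := by simp [vnorm]

theorem vnorm_eq_norm_toLp {n : ℕ} (x : Fin n → ℝ) : vnorm x = ‖WithLp.toLp 2 x‖ := by
  simp [vnorm, EuclideanSpace.norm_eq]

theorem convexOn_vnorm {n : ℕ} : ConvexOn ℝ univ (vnorm : (Fin n → ℝ) → ℝ) := by
  have := (convexOn_norm convex_univ).comp_linearMap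
    (WithLp.linearEquiv 2 ℝ (Fin n → ℝ)).symm.toLinearMap
  simpa [Function.comp_def, ← vnorm_eq_norm_toLp] using this

theorem convexOn_sum_mul_vnorm {ι : Type*} [Fintype ι] {n : ℕ} {τ : ι → ℝ}
    (hτ : ∀ j, 0 ≤ τ j) : ConvexOn ℝ univ fun θ : ι → Fin n → ℝ => ∑ j, τ j * vnorm (θ j) := by
  have hsum : (fun θ : ι → Fin n → ℝ => ∑ j, τ j * vnorm (θ j))
      = ∑ j, fun θ => τ j * vnorm (θ j) := by
    ext θ; simp [Finset.sum_apply]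
  rw [hsum]
  refine Finset.sum_induction _ (ConvexOn ℝ univ) (fun _ _ => ConvexOn.add)
    (convexOn_const 0 convex_univ) fun j _ => ?_
  exact (convexOn_vnorm.comp_linearMap
    (LinearMap.proj (R := ℝ) (φ := fun _ : ι => Fin n → ℝ) j)).smul (hτ j)

theorem sum_mul_le_mul_vnorm_of_vnorm_le {n : ℕ} (a : Fin n → ℝ) {g : Fin n → ℝ} {c : ℝ}
    (hg : vnorm g ≤ c) : ∑ i, a i * g i ≤ c * vnorm a :=
  calc ∑ i, a i * g i ≤ vnorm a * vnorm g := Real.sum_mul_le_sqrt_mul_sqrt _ a g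
    _ ≤ c * vnorm a := by rw [mul_comm]; exact mul_le_mul_of_nonneg_right hg (Real.sqrt_nonneg _)

/-- If `θ̂` maximises the group-penalised concave objective `Q = f - ∑_j τ_j‖θ_j‖`
over the subspace where the blocks in `J` vanish, and the block gradients of `f`
at `θ̂` over `J` are strictly dually feasible, then `θ̂` is a global maximiser. -/
theorem sparse_maximiser_is_global (d n : ℕ) (f : (Fin d → Fin n → ℝ) → ℝ)
    (hf : ConcaveOn ℝ Set.univ f) (hfd : Differentiable ℝ f)
    (τ : Fin d → ℝ) (hτ : ∀ j, 0 ≤ τ j)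
    (Q : (Fin d → Fin n → ℝ) → ℝ)
    (hQ : ∀ θ, Q θ = f θ - ∑ j, τ j * vnorm (θ j))
    (J : Finset (Fin d)) (θhat : Fin d → Fin n → ℝ)
    (hθJ : ∀ j ∈ J, θhat j = 0)
    (hmax : ∀ θ : Fin d → Fin n → ℝ, (∀ j ∈ J, θ j = 0) → Q θ ≤ Q θhat)
    (hdual : ∀ j ∈ J,
      vnorm (fun i => fderiv ℝ f θhat (Pi.single j (Pi.single i (1:ℝ)))) < τ j) :
    ∀ θ, Q θ ≤ Q θhat := by
  intro θ
  set L := fderiv ℝ f θhat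
  set P : (Fin d → Fin n → ℝ) → ℝ := fun θ => ∑ j, τ j * vnorm (θ j) with hP
  set S : Set (Fin d → Fin n → ℝ) := {θ | ∀ j ∈ J, θ j = 0}
  set ψ : Fin d → Fin n → ℝ := fun j => if j ∈ J then 0 else θ j
  have hS : Convex ℝ S := fun x hx y hy a b _ _ _ j hj => by simp [hx j hj, hy j hj]
  have h_sub : L (ψ - θhat) ≤ P ψ - P θhat :=
    fderiv_le_sub_of_isMaxOn_sub ((convexOn_sum_mul_vnorm hτ).subset (subset_univ S) hS)
      (hfd θhat) (fun θ hθ => by simpa [hQ] using hmax θ hθ) hθJ (fun j hj => by simp [ψ, hj])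
  have h_dual : L (θ - ψ) ≤ P θ - P ψ := by
    rw [← ContinuousLinearMap.coe_coe, LinearMap.apply_eq_sum_sum_smul_single, hP,
      ← Finset.sum_sub_distrib]
    refine Finset.sum_le_sum fun j _ => ?_
    by_cases hj : j ∈ J
    · simpa [ψ, hj] using sum_mul_le_mul_vnorm_of_vnorm_le (θ j) (hdual j hj).le
    · simp [ψ, hj]
  have h_tan := hf.le_add_fderiv (hfd θhat) (mem_univ θhat) (mem_univ θ)
  have h_split : θ - θhat = (ψ - θhat) + (θ - ψ) := by abel
  rw [h_split, map_add] at h_tan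
  rw [hQ, hQ]
  linarith
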